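/- arXiv:hep-th/9801168 — 3 statements merged into one kernel-verified Lean document; each statement's English description precedes it below -/
import Mathlib

section
/- The double Euler sum ∑_{n=1}^∞ H_n / n^2 equals 2ζ(3), where H_n = ∑_{j=1}^n 1/j is the n-th harmonic number. -/
open scoped BigOperators

noncomputable def H (n : ℕ) : ℝ := ∑ j ∈ Finset.range n, (1:ℝ)/(j+1)

noncomputable def zeta3 : ℝ := ∑' n : ℕ, (1:ℝ)/((n:ℝ)+1)^3

/-!
Euler's argument. The double series `F(m, n) = 1/((m+1)(n+1)(m+n+2))` (`eulerKernel`) sums,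
along each row, to `H_{m+1}/(m+1)^2` by telescoping, so its total is the series `S` of the
theorem. The partial fractions `F(m, n) = G(m, n) + G(n, m)` with `G(m, n) = 1/((m+1)(m+n+2)^2)`
(`eulerHalfKernel`) give `S = 2B`, where summing `G` along antidiagonals shows
`B = ∑ H_n/(n+1)^2`. On the other hand `H_{n+1} = H_n + 1/(n+1)` gives `S = B + ζ(3)`.
Hence `B = ζ(3)` and `S = 2ζ(3)`. Absolute convergence comes from `∑_n G(m, n) ≤ 1/(m+1)^2`.
-/

open Filter Topology Finset

theorem HasSum.sum_antidiagonal {A α : Type*} [AddCommMonoid A] [HasAntidiagonal A]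
    [AddCommMonoid α] [TopologicalSpace α] [ContinuousAdd α] [RegularSpace α]
    {f : A × A → α} {a : α} (hf : HasSum f a) :
    HasSum (fun n ↦ ∑ p ∈ antidiagonal n, f p) a :=
  (HasAntidiagonal.sigmaAntidiagonalEquivProd.hasSum_iff.2 hf).sigma
    fun n ↦ (antidiagonal n).hasSum f

theorem hasSum_sub_add_of_antitone {a : ℕ → ℝ} (ha : Antitone a)
    (h0 : Tendsto a atTop (𝓝 0)) (k : ℕ) :
    HasSum (fun n ↦ a n - a (n + k)) (∑ i ∈ range k, a i) := by
  rw [hasSum_iff_tendsto_nat_of_nonneg fun n ↦ sub_nonneg.2 (ha (Nat.le_add_right n k))]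
  have partial_sum (N : ℕ) : ∑ n ∈ range N, (a n - a (n + k)) =
      ∑ i ∈ range k, a i - ∑ i ∈ range k, a (N + i) := by
    have h₁ := sum_range_add a N k
    have h₂ := sum_range_add a k N
    rw [add_comm N k] at h₁
    simp only [sum_sub_distrib, add_comm _ k]
    linarith
  simp only [partial_sum]
  have h_tail : Tendsto (fun N ↦ ∑ i ∈ range k, a (N + i)) atTop (𝓝 0) := by
    simpa using tendsto_finsetSum (range k) fun i _ ↦ h0.comp (tendsto_add_atTop_nat i)
  simpa using h_tail.const_sub (∑ i ∈ range k, a i)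

theorem hasSum_one_div_sub_one_div (c k : ℕ) :
    HasSum (fun n : ℕ ↦ 1 / ((n : ℝ) + c + 1) - 1 / ((n : ℝ) + c + k + 1))
      (∑ i ∈ range k, 1 / ((i : ℝ) + c + 1)) := by
  have ha : Antitone fun n : ℕ ↦ 1 / ((n : ℝ) + c + 1) :=
    fun i j hij ↦ one_div_le_one_div_of_le (by positivity) (by gcongr)
  have h0 : Tendsto (fun n : ℕ ↦ 1 / ((n : ℝ) + c + 1)) atTop (𝓝 0) := by
    refine ((tendsto_one_div_add_atTop_nhds_zero_nat (𝕜 := ℝ)).comp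
      (tendsto_add_atTop_nat c)).congr fun n ↦ ?_
    simp only [Function.comp_apply, Nat.cast_add, add_assoc]
  convert hasSum_sub_add_of_antitone ha h0 k using 3
  push_cast
  ring

lemma H_succ (n : ℕ) : H (n + 1) = H n + 1 / ((n : ℝ) + 1) := by
  simp [H, sum_range_succ]

noncomputable def eulerKernel (p : ℕ × ℕ) : ℝ :=
  1 / (((p.1 : ℝ) + 1) * ((p.2 : ℝ) + 1) * ((p.1 : ℝ) + p.2 + 2))

noncomputable def eulerHalfKernel (p : ℕ × ℕ) : ℝ :=
  1 / (((p.1 : ℝ) + 1) * ((p.1 : ℝ) + p.2 + 2) ^ 2)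

lemma eulerKernel_eq_add_swap (p : ℕ × ℕ) :
    eulerKernel p = eulerHalfKernel p + eulerHalfKernel p.swap := by
  simp only [eulerKernel, eulerHalfKernel, Prod.fst_swap, Prod.snd_swap]
  field_simp
  ring

lemma hasSum_eulerKernel_row (m : ℕ) :
    HasSum (fun n ↦ eulerKernel (m, n)) (H (m + 1) / ((m : ℝ) + 1) ^ 2) := by
  have h := (hasSum_one_div_sub_one_div 0 (m + 1)).mul_left (1 / ((m : ℝ) + 1) ^ 2)
  have h_term : (fun n ↦ eulerKernel (m, n)) = fun n : ℕ ↦ 1 / ((m : ℝ) + 1) ^ 2 *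
      (1 / ((n : ℝ) + (0 : ℕ) + 1) - 1 / ((n : ℝ) + (0 : ℕ) + (m + 1 : ℕ) + 1)) := by
    funext n
    simp only [eulerKernel, Nat.cast_zero, Nat.cast_add, Nat.cast_one]
    field_simp
    ring
  have h_value : H (m + 1) / ((m : ℝ) + 1) ^ 2 =
      1 / ((m : ℝ) + 1) ^ 2 * ∑ i ∈ range (m + 1), 1 / ((i : ℝ) + (0 : ℕ) + 1) := by
    simp [H, div_eq_mul_inv, mul_comm]
  rwa [h_term, h_value]

lemma eulerHalfKernel_le (m n : ℕ) :
    eulerHalfKernel (m, n) ≤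
      1 / ((m : ℝ) + 1) * (1 / ((n : ℝ) + m + 1) - 1 / ((n : ℝ) + m + 1 + 1)) := by
  have hsub : 1 / ((n : ℝ) + m + 1) - 1 / ((n : ℝ) + m + 1 + 1) =
      1 / (((n : ℝ) + m + 1) * ((n : ℝ) + m + 2)) := by
    field_simp
    ring
  rw [hsub, eulerHalfKernel, one_div_mul_one_div]
  gcongr
  nlinarith

lemma summable_one_div_nat_add_one_pow {p : ℕ} (hp : 1 < p) :
    Summable fun n : ℕ ↦ 1 / ((n : ℝ) + 1) ^ p := by
  exact_mod_cast (summable_nat_add_iff 1).2 (Real.summable_one_div_nat_pow.2 hp)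

lemma summable_eulerHalfKernel : Summable eulerHalfKernel := by
  have h_nonneg : 0 ≤ eulerHalfKernel := fun p ↦ by unfold eulerHalfKernel; positivity
  have h_row (m : ℕ) := (hasSum_one_div_sub_one_div m 1).mul_left (1 / ((m : ℝ) + 1))
  have h_row_summable (m : ℕ) : Summable fun n ↦ eulerHalfKernel (m, n) :=
    (h_row m).summable.of_nonneg_of_le (fun n ↦ h_nonneg _) fun n ↦ by
      simpa using eulerHalfKernel_le m n
  have h_row_le (m : ℕ) : ∑' n, eulerHalfKernel (m, n) ≤ 1 / ((m : ℝ) + 1) ^ 2 := by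
    refine (hasSum_le (fun n ↦ ?_) (h_row_summable m).hasSum (h_row m)).trans_eq ?_
    · simpa using eulerHalfKernel_le m n
    · simp [sq]
  refine (summable_prod_of_nonneg h_nonneg).2 ⟨h_row_summable, ?_⟩
  exact (summable_one_div_nat_add_one_pow one_lt_two).of_nonneg_of_le
    (fun m ↦ tsum_nonneg fun n ↦ h_nonneg _) h_row_le

lemma sum_antidiagonal_eulerHalfKernel (n : ℕ) :
    ∑ p ∈ antidiagonal n, eulerHalfKernel p = H (n + 1) / ((n : ℝ) + 2) ^ 2 := by
  rw [Nat.sum_antidiagonal_eq_sum_range_succ_mk, H, sum_div]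
  refine sum_congr rfl fun k hk ↦ ?_
  have h_diag : (k : ℝ) + ((n - k : ℕ) : ℝ) + 2 = n + 2 := by
    rw [Nat.cast_sub (by simpa [Nat.lt_succ_iff] using hk)]
    ring
  rw [eulerHalfKernel, h_diag, div_div]

lemma hasSum_zeta3 : HasSum (fun n : ℕ ↦ 1 / ((n : ℝ) + 1) ^ 3) zeta3 :=
  (summable_one_div_nat_add_one_pow (by norm_num)).hasSum

theorem stmt0 : ∑' n : ℕ, H (n+1) / ((n:ℝ)+1)^2 = 2 * zeta3 := by
  obtain ⟨T, hT⟩ := summable_eulerHalfKernel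
  have hS₁ : HasSum (fun m : ℕ ↦ H (m + 1) / ((m : ℝ) + 1) ^ 2) (T + T) := by
    have hK : HasSum eulerKernel (T + T) := by
      rw [show eulerKernel = _ from funext eulerKernel_eq_add_swap]
      exact hT.add ((Equiv.prodComm ℕ ℕ).hasSum_iff.2 hT)
    exact hK.prod_fiberwise hasSum_eulerKernel_row
  have hB : HasSum (fun n : ℕ ↦ H n / ((n : ℝ) + 1) ^ 2) T := by
    rw [← hasSum_nat_add_iff' 1]
    simpa [H, sum_antidiagonal_eulerHalfKernel, add_assoc, one_add_one_eq_two] using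
      hT.sum_antidiagonal
  have hS₂ : HasSum (fun m : ℕ ↦ H (m + 1) / ((m : ℝ) + 1) ^ 2) (T + zeta3) := by
    convert hB.add hasSum_zeta3 using 2 with n
    rw [H_succ]
    field_simp
  have hT_eq : T = zeta3 := by linarith [hS₁.unique hS₂]
  rw [hS₁.tsum_eq, hT_eq, two_mul]
end

section
/- The alternating central binomial sum ∑_{n=1}^∞ (-1)^{n+1} (n!)² / (n³ (2n)!) equals (2/5)ζ(3). Equivalently, ∑_{n=1}^∞ (-1)^n ((n-1)!)² / (n² (2n-1)!) = -(4/5)ζ(3). -/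
open scoped BigOperators

/-!
Markov's acceleration, via a Wilf–Zeilberger pair `F`, `G` with
`F (N + 1) j - F N j = G N (j + 1) - G N j` for `j < N`. Summing over `j < N` telescopes, and since
`G N 0 = 1 / (N + 1)³` and `F (N + 1) N + G N N = 5/2 · t N` (with `t` the summand), induction gives
`∑_{j<N} 1 / (j + 1)³ + ∑_{j<N} F N j = 5/2 ∑_{j<N} t j`. The factorial bound
`k!² (N - k)! / (N + k)! ≤ 1 / (N + 1)` makes `∑_{j<N} F N j = O(1 / N)`, so the partial sums of `t`
tend to `2/5 ζ(3)`; the same bound gives absolute summability of `t`.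
-/

open Finset Filter Topology Nat

noncomputable section

def aperyTerm (n : ℕ) : ℝ :=
  (-1) ^ n * ((n + 1)! : ℝ) ^ 2 / (((n : ℝ) + 1) ^ 3 * ((2 * (n + 1))! : ℝ))

def wzF (N j : ℕ) : ℝ :=
  (-1) ^ j * ((j + 1)! : ℝ) ^ 2 * ((N - (j + 1))! : ℝ) /
    (2 * ((j : ℝ) + 1) ^ 3 * ((N + (j + 1))! : ℝ))

def wzG (N k : ℕ) : ℝ :=
  (-1) ^ k * (k ! : ℝ) ^ 2 * ((N - k)! : ℝ) / (((N : ℝ) + 1) ^ 2 * ((N + 1 + k)! : ℝ))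

lemma wzF_succ_sub_wzF {N j : ℕ} (hj : j < N) :
    wzF (N + 1) j - wzF N j = wzG N (j + 1) - wzG N j := by
  obtain ⟨m, rfl⟩ := Nat.exists_eq_add_of_lt hj
  have e1 : j + m + 1 + 1 - (j + 1) = m + 1 := by omega
  have e2 : j + m + 1 - (j + 1) = m := by omega
  have e3 : j + m + 1 - j = m + 1 := by omega
  have e4 : j + m + 1 + 1 + (j + 1) = j + m + 1 + (j + 1) + 1 := by omega
  have e5 : j + m + 1 + 1 + j = j + m + 1 + (j + 1) := by omega
  simp only [wzF, wzG, e1, e2, e3, e4, e5, Nat.factorial_succ]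
  push_cast
  field_simp
  ring

lemma wzG_zero (N : ℕ) : wzG N 0 = 1 / ((N : ℝ) + 1) ^ 3 := by
  simp only [wzG, Nat.sub_zero, Nat.add_zero, pow_zero, one_mul, Nat.factorial_succ]
  push_cast
  field_simp
  ring

lemma wzF_succ_self_add_wzG_self (N : ℕ) : wzF (N + 1) N + wzG N N = 5 / 2 * aperyTerm N := by
  have e1 : 2 * (N + 1) = N + 1 + N + 1 := by omega
  simp only [wzF, wzG, aperyTerm, Nat.sub_self, e1, ← add_assoc, Nat.factorial_succ,
    Nat.factorial_zero]
  push_cast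
  field_simp
  ring

lemma sum_inv_cube_add_sum_wzF (N : ℕ) :
    ∑ j ∈ range N, 1 / ((j : ℝ) + 1) ^ 3 + ∑ j ∈ range N, wzF N j
      = 5 / 2 * ∑ j ∈ range N, aperyTerm j := by
  induction N with
  | zero => simp
  | succ N ih =>
    have htelescope :
        ∑ j ∈ range N, wzF (N + 1) j = ∑ j ∈ range N, wzF N j + (wzG N N - wzG N 0) := by
      rw [← Finset.sum_range_sub (wzG N), ← Finset.sum_add_distrib]
      refine Finset.sum_congr rfl fun j hj => ?_
      linarith [wzF_succ_sub_wzF (mem_range.1 hj)]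
    rw [Finset.sum_range_succ, Finset.sum_range_succ, Finset.sum_range_succ, htelescope, wzG_zero]
    linarith [wzF_succ_self_add_wzG_self N]

lemma factorial_sq_mul_factorial_sub_div_le {N k : ℕ} (hk : 1 ≤ k) (hkN : k ≤ N) :
    (k ! : ℝ) ^ 2 * ((N - k)! : ℝ) / ((N + k)! : ℝ) ≤ 1 / ((N : ℝ) + 1) := by
  have hsplit : k ! * (N - k)! ≤ N ! :=
    Nat.le_of_dvd (Nat.factorial_pos N) (Nat.factorial_mul_factorial_dvd_factorial hkN)
  -- `(N + k)! = C(N + k, N) N! k!` and `C(N + k, N) ≥ C(N + 1, N) = N + 1`.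
  have hchoose : N + 1 ≤ (N + k).choose N :=
    Nat.choose_succ_self_right N ▸ Nat.choose_le_choose N (by omega)
  have hmerge : (N + 1) * (k ! * (k ! * (N - k)!)) ≤ (N + k)! :=
    calc (N + 1) * (k ! * (k ! * (N - k)!)) ≤ (N + k).choose N * (k ! * N !) := by gcongr
      _ = (N + k)! := by rw [add_comm N k, ← Nat.add_choose_mul_factorial_mul_factorial k N]; ring
  rw [div_le_div_iff₀ (by positivity) (by positivity)]
  exact_mod_cast (by linarith [hmerge] : (k ! ^ 2 * (N - k)!) * (N + 1) ≤ 1 * (N + k)!)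

lemma abs_wzF_le {N j : ℕ} (hj : j < N) :
    |wzF N j| ≤ 1 / ((j : ℝ) + 1) ^ 3 / 2 * (1 / ((N : ℝ) + 1)) := by
  have hratio := factorial_sq_mul_factorial_sub_div_le (N := N) (k := j + 1) (by omega) hj
  rw [wzF, abs_div, abs_mul, abs_mul, abs_pow, abs_neg, abs_one, one_pow, one_mul,
    abs_of_nonneg (by positivity), abs_of_nonneg (by positivity), abs_of_nonneg (by positivity)]
  calc _ = 1 / ((j : ℝ) + 1) ^ 3 / 2 *
        (((j + 1)! : ℝ) ^ 2 * ((N - (j + 1))! : ℝ) / ((N + (j + 1))! : ℝ)) := by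
          field_simp
    _ ≤ _ := by gcongr

lemma summable_one_div_succ_cube : Summable fun n : ℕ => 1 / ((n : ℝ) + 1) ^ 3 := by
  exact_mod_cast (summable_nat_add_iff 1).mpr
    (Real.summable_one_div_nat_pow.mpr (by norm_num : 1 < 3))

lemma tendsto_sum_wzF : Tendsto (fun N => ∑ j ∈ range N, wzF N j) atTop (𝓝 0) := by
  refine squeeze_zero_norm (fun N => ?_)
    ((tendsto_one_div_add_atTop_nhds_zero_nat).const_mul (zeta3 / 2) |>.trans (by simp))
  calc ‖∑ j ∈ range N, wzF N j‖
        ≤ ∑ j ∈ range N, 1 / ((j : ℝ) + 1) ^ 3 / 2 * (1 / ((N : ℝ) + 1)) :=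
        norm_sum_le_of_le _ fun j hj => abs_wzF_le (mem_range.1 hj)
    _ = (∑ j ∈ range N, 1 / ((j : ℝ) + 1) ^ 3) / 2 * (1 / ((N : ℝ) + 1)) := by
        rw [Finset.sum_div, Finset.sum_mul]
    _ ≤ zeta3 / 2 * (1 / ((N : ℝ) + 1)) := by
        gcongr
        exact summable_one_div_succ_cube.sum_le_tsum _ (fun j _ => by positivity)

lemma summable_aperyTerm : Summable aperyTerm := by
  refine summable_one_div_succ_cube.of_norm_bounded fun n => ?_
  have hratio := factorial_sq_mul_factorial_sub_div_le (N := n + 1) (k := n + 1) (by omega) le_rfl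
  rw [Nat.sub_self, Nat.factorial_zero, Nat.cast_one, mul_one, ← two_mul] at hratio
  rw [aperyTerm, norm_div, norm_mul, norm_pow, norm_neg, norm_one, one_pow, one_mul,
    Real.norm_of_nonneg (by positivity), Real.norm_of_nonneg (by positivity)]
  calc _ = 1 / ((n : ℝ) + 1) ^ 3 * (((n + 1)! : ℝ) ^ 2 / ((2 * (n + 1))! : ℝ)) := by
        field_simp
    _ ≤ 1 / ((n : ℝ) + 1) ^ 3 * 1 := by
        gcongr
        exact hratio.trans
          (div_le_one_of_le₀ (le_add_of_nonneg_left (Nat.cast_nonneg _)) (by positivity))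
    _ = _ := mul_one _

lemma hasSum_aperyTerm : HasSum aperyTerm (2 / 5 * zeta3) := by
  refine (summable_aperyTerm.hasSum_iff_tendsto_nat).mpr ?_
  have hpartial : ∀ N, ∑ j ∈ range N, aperyTerm j
      = 2 / 5 * (∑ j ∈ range N, 1 / ((j : ℝ) + 1) ^ 3 + ∑ j ∈ range N, wzF N j) := fun N => by
    rw [sum_inv_cube_add_sum_wzF]; ring
  simpa only [hpartial, add_zero, zeta3] using
    (summable_one_div_succ_cube.hasSum.tendsto_sum_nat.add tendsto_sum_wzF).const_mul (2 / 5)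

end

theorem stmt10 : ∑' n : ℕ, (-1:ℝ)^n * (Nat.factorial (n+1) : ℝ)^2
    / (((n:ℝ)+1)^3 * (Nat.factorial (2*(n+1)) : ℝ)) = (2/5) * zeta3 :=
  hasSum_aperyTerm.tsum_eq
end

section
/- The double series ∑_{n=1}^∞ ∑_{k=1}^∞ (1/k!) · Γ(2k)Γ(n+k)/Γ(1+n+2k) equals (1/2)ζ(2) = π²/12. -/
/-!
For fixed `k` the inner series telescopes: with `a = c = k + 1` one has
`(n + a)! / (n + a + c + 1)! = u n - u (n + 1)` for `u n = (n + a)! / (c (n + a + c)!)`, and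
`u n → 0`, so the `k`-th column sums to `(2k + 1)! / (k + 1)! * u 0 = 1 / (2 (k + 1)^2)`.
All terms are nonnegative, so the order of summation may be exchanged, and summing the columns
gives `ζ(2) / 2 = π^2 / 12`.
-/

open scoped BigOperators

open Filter Topology Nat

theorem hasSum_sub_succ_of_antitone {u : ℕ → ℝ} {l : ℝ} (hu : Antitone u)
    (hl : Tendsto u atTop (𝓝 l)) : HasSum (fun n ↦ u n - u (n + 1)) (u 0 - l) := by
  rw [hasSum_iff_tendsto_nat_of_nonneg (fun n ↦ sub_nonneg.2 (hu n.le_succ))]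
  simpa only [Finset.sum_range_sub'] using hl.const_sub (u 0)

theorem factorial_div_factorial_add_le (m c : ℕ) (hc : 0 < c) :
    ((m ! : ℝ) / (m + c)!) ≤ 1 / (m + 1) := by
  have key : m ! * (m + 1) ≤ (m + c)! :=
    le_trans (Nat.mul_le_mul_left _ (Nat.le_self_pow hc.ne' _)) factorial_mul_pow_le_factorial
  rw [div_le_div_iff₀ (by positivity) (by positivity), one_mul]
  exact_mod_cast key

theorem hasSum_factorial_div_factorial (a c : ℕ) (hc : 0 < c) :
    HasSum (fun n ↦ ((n + a)! : ℝ) / (n + a + c + 1)!) ((a ! : ℝ) / (c * (a + c)!)) := by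
  set u : ℕ → ℝ := fun n ↦ ((n + a)! : ℝ) / (c * (n + a + c)!) with hu
  have hdiff : ∀ n, u n - u (n + 1) = ((n + a)! : ℝ) / (n + a + c + 1)! := by
    intro n
    simp only [hu, show n + 1 + a = n + a + 1 by ring, show n + a + 1 + c = n + a + c + 1 by ring,
      factorial_succ]
    push_cast
    field_simp
    ring
  have hanti : Antitone u := antitone_nat_of_succ_le fun n ↦
    sub_nonneg.1 ((hdiff n).symm ▸ by positivity)
  have hlim : Tendsto u atTop (𝓝 0) := by
    refine squeeze_zero (fun n ↦ by positivity) (fun n ↦ ?_)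
      (tendsto_one_div_add_atTop_nhds_zero_nat.comp (tendsto_add_atTop_nat a))
    calc u n ≤ ((n + a)! : ℝ) / (n + a + c)! :=
          div_le_div_of_nonneg_left (by positivity) (by positivity)
            (le_mul_of_one_le_left (by positivity) (by exact_mod_cast hc))
      _ ≤ _ := by simpa using factorial_div_factorial_add_le (n + a) c hc
  have h := hasSum_sub_succ_of_antitone hanti hlim
  rw [funext hdiff] at h
  simpa [hu] using h

theorem hasSum_column (k : ℕ) :
    HasSum (fun n : ℕ ↦ (1 / ((k + 1)! : ℝ)) *
      (((2 * k + 1)! : ℝ) * ((n + k + 1)! : ℝ) / ((n + 2 * k + 3)! : ℝ)))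
      (1 / (2 * ((k : ℝ) + 1) ^ 2)) := by
  have h := (hasSum_factorial_div_factorial (k + 1) (k + 1) k.succ_pos).mul_left
    (((2 * k + 1)! : ℝ) / (k + 1)!)
  have hsum : ((2 * k + 1)! : ℝ) / (k + 1)! * ((k + 1)! / ((k + 1 : ℕ) * (k + 1 + (k + 1))!)) =
      1 / (2 * ((k : ℝ) + 1) ^ 2) := by
    rw [show k + 1 + (k + 1) = 2 * k + 1 + 1 by ring, factorial_succ (2 * k + 1)]
    push_cast
    field_simp
    ring
  rw [hsum] at h
  refine h.congr_fun fun n ↦ ?_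
  rw [show n + (k + 1) + (k + 1) + 1 = n + 2 * k + 3 by ring, ← add_assoc]
  ring

theorem hasSum_one_div_two_mul_succ_sq :
    HasSum (fun k : ℕ ↦ 1 / (2 * ((k : ℝ) + 1) ^ 2)) (Real.pi ^ 2 / 12) := by
  have h := ((hasSum_nat_add_iff' 1).2 hasSum_zeta_two).div_const 2
  rw [show Real.pi ^ 2 / 12 = (Real.pi ^ 2 / 6 - ∑ i ∈ Finset.range 1, 1 / (i : ℝ) ^ 2) / 2 by
    norm_num; ring]
  refine h.congr_fun fun k ↦ ?_
  push_cast
  field_simp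

theorem tsum_tsum_eq_of_hasSum_of_nonneg {β γ : Type*} {f : β → γ → ℝ} {g : γ → ℝ} {s : ℝ}
    (hf : ∀ b c, 0 ≤ f b c) (hg : ∀ c, HasSum (fun b ↦ f b c) (g c)) (hs : HasSum g s) :
    ∑' b, ∑' c, f b c = s := by
  have hsw : Summable fun p : γ × β ↦ f p.2 p.1 :=
    (summable_prod_of_nonneg fun p ↦ hf p.2 p.1).2
      ⟨fun c ↦ (hg c).summable, by simpa only [(hg _).tsum_eq] using hs.summable⟩
  rw [hsw.tsum_comm' (fun c ↦ (hg c).summable) (fun b ↦ hsw.prod_symm.prod_factor b)]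
  simpa only [(hg _).tsum_eq] using hs.tsum_eq

theorem stmt14 : ∑' n : ℕ, ∑' k : ℕ,
    (1 / (Nat.factorial (k+1) : ℝ)) *
    ((Nat.factorial (2*k+1) : ℝ) * (Nat.factorial (n+k+1) : ℝ) / (Nat.factorial (n+2*k+3) : ℝ))
    = Real.pi^2 / 12 :=
  tsum_tsum_eq_of_hasSum_of_nonneg (fun _ _ ↦ by positivity) hasSum_column
    hasSum_one_div_two_mul_succ_sq
end
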